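/- arXiv:math/0002121 — 2 statements merged into one kernel-verified Lean document; each statement's English description precedes it below -/
import Mathlib

section
/- Let m, l', d, r, A, B, I be integers with m ≥ 2, 1 ≤ l' ≤ m − 1, d ≥ 1, r ≥ 0, A ≥ 0, B ≥ 0, A + B ≥ 2, such that I is even and m·I = 2·(d + m·r − m·A + l'·(A − B)). Then I ≤ 2(d + r) − 4. -/
/-- Let `m, l', d, r, A, B, I` be integers with `m ≥ 2`, `1 ≤ l' ≤ m − 1`, `d ≥ 1`,
`r ≥ 0`, `A ≥ 0`, `B ≥ 0`, `A + B ≥ 2`, such that `I` is even and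
`m·I = 2·(d + m·r − m·A + l'·(A − B))`.  Then `I ≤ 2(d + r) − 4`. -/
theorem index_bound_lemma_destor
    (m l' d r A B I : ℤ) (hm : 2 ≤ m) (hl1 : 1 ≤ l') (hl2 : l' ≤ m - 1)
    (hd : 1 ≤ d) (hr : 0 ≤ r) (hA : 0 ≤ A) (hB : 0 ≤ B) (hAB : 2 ≤ A + B)
    (hI : Even I) (heq : m * I = 2 * (d + m * r - m * A + l' * (A - B))) :
    I ≤ 2 * (d + r) - 4 := by
  by_contra h
  push_neg at h
  obtain ⟨k, hk⟩ := hI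
  subst hk
  have hk1 : d + r - 1 ≤ k := by omega
  nlinarith [mul_nonneg (by linarith : (0:ℤ) ≤ m - 1) (by linarith : (0:ℤ) ≤ d - 1),
    mul_nonneg (by linarith : (0:ℤ) ≤ m - l' - 1) hA,
    mul_nonneg (by linarith : (0:ℤ) ≤ l' - 1) hB,
    mul_le_mul_of_nonneg_left hk1 (by linarith : (0:ℤ) ≤ m)]
end

section
/- Let m ≥ 2 be an integer, θ = exp(2πi/m) ∈ ℂ, and l' an integer with 1 ≤ l' ≤ m − 1. Let P₊, Z₊, N₊, P₋, Z₋, N₋, N be nonnegative integers with P₊ + Z₊ + N₊ = N and P₋ + Z₋ + N₋ = N, and let d be an integer. Then, as complex numbers, d + N + ∑_{k=1}^{m−1} [ (P₊·θ^{l'k} + Z₊ + N₊·θ^{−l'k})/(1 − θ^{−k}) + (P₋·θ^{l'k} + Z₋ + N₋·θ^{−l'k})/(1 − θ^{k}) ] = d + m·N − m·(P₋ + N₊) + l'·(P₋ + N₊ − P₊ − N₋). -/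
/-!
Write `x = θ ^ k`. Since `1 / (1 - x⁻¹) = 1 - 1 / (1 - x)`, every summand splits into
character sums `∑ₖ θ ^ (a k)`, equal to `m - 1` or `-1` according as `m ∣ a`, and the sums
`G a = lefschetzSum θ m a = ∑ₖ θ ^ (a k) / (1 - θ ^ k)`. Telescoping gives `G a - G (a + 1) = ∑ₖ θ ^ (a k)` and
the reflection `k ↦ m - k` gives `G a + G (-a) = ∑ₖ θ ^ (a k)`; hence `2 G 0 = m - 1` and
`G a = G 0 + a - m` for `1 ≤ a ≤ m`.
-/

open Finset

lemma Nat.Icc_one_sub_one_eq_Ico (m : ℕ) : Icc 1 (m - 1) = Ico 1 m := by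
  ext k; simp only [mem_Icc, mem_Ico]; omega

lemma Finset.sum_Icc_one_sub_one_reflect {M : Type*} [AddCommMonoid M] (f : ℕ → M) (m : ℕ) :
    ∑ k ∈ Icc 1 (m - 1), f (m - k) = ∑ k ∈ Icc 1 (m - 1), f k := by
  simpa [Nat.Icc_one_sub_one_eq_Ico] using sum_Ico_reflect f 1 (Nat.le_succ m)

section
variable {K : Type*} [Field K] {ζ : K} {m : ℕ}

lemma div_one_sub_inv {x : K} (hx0 : x ≠ 0) (hx1 : x ≠ 1) (c : K) :
    c / (1 - x⁻¹) = c - c / (1 - x) := by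
  have : 1 - x ≠ 0 := sub_ne_zero.mpr hx1.symm
  field_simp
  ring

lemma sum_Icc_one_sub_one_pow {x : K} (hm : 0 < m) (hx : x ^ m = 1) (hx1 : x ≠ 1) :
    ∑ k ∈ Icc 1 (m - 1), x ^ k = -1 := by
  have hgeom : ∑ k ∈ range m, x ^ k = 0 := by
    rw [geom_sum_eq hx1, hx, sub_self, zero_div]
  rw [sum_range_eq_add_Ico _ hm, pow_zero] at hgeom
  rw [Nat.Icc_one_sub_one_eq_Ico]
  linear_combination hgeom

lemma sum_Icc_one_sub_one_zpow_zero_mul (hm : 0 < m) :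
    ∑ k ∈ Icc 1 (m - 1), ζ ^ ((0 : ℤ) * k) = m - 1 := by
  simp [Nat.cast_sub hm]

namespace IsPrimitiveRoot

variable (hζ : IsPrimitiveRoot ζ m)
include hζ

lemma pow_ne_one_of_mem_Icc {k : ℕ} (hk : k ∈ Icc 1 (m - 1)) : ζ ^ k ≠ 1 := by
  rw [mem_Icc] at hk
  exact hζ.pow_ne_one_of_pos_of_lt (by omega) (by omega)

lemma sum_Icc_one_sub_one_zpow_mul (hm : 0 < m) {a : ℤ} (ha : ¬ (m : ℤ) ∣ a) :
    ∑ k ∈ Icc 1 (m - 1), ζ ^ (a * k) = -1 := by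
  simp only [zpow_mul, zpow_natCast]
  refine sum_Icc_one_sub_one_pow hm ?_ ((hζ.zpow_eq_one_iff_dvd a).not.mpr ha)
  rw [← zpow_natCast, ← zpow_mul, mul_comm, zpow_mul, zpow_natCast, hζ.pow_eq_one, one_zpow]

end IsPrimitiveRoot

def lefschetzSum (ζ : K) (m : ℕ) (a : ℤ) : K :=
  ∑ k ∈ Icc 1 (m - 1), ζ ^ (a * k) / (1 - ζ ^ k)

variable (hζ : IsPrimitiveRoot ζ m)
include hζ

lemma lefschetzSum_sub_lefschetzSum_add_one (a : ℤ) :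
    lefschetzSum ζ m a - lefschetzSum ζ m (a + 1) = ∑ k ∈ Icc 1 (m - 1), ζ ^ (a * k) := by
  rw [lefschetzSum, lefschetzSum, ← sum_sub_distrib]
  refine sum_congr rfl fun k hk => ?_
  have hk1 : 1 - ζ ^ k ≠ 0 := sub_ne_zero.mpr (hζ.pow_ne_one_of_mem_Icc hk).symm
  rw [add_mul, one_mul, zpow_add₀ (hζ.ne_zero (by grind)), zpow_natCast]
  field_simp

lemma lefschetzSum_add_lefschetzSum_neg (a : ℤ) :
    lefschetzSum ζ m a + lefschetzSum ζ m (-a) = ∑ k ∈ Icc 1 (m - 1), ζ ^ (a * k) := by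
  have hreflect :
      lefschetzSum ζ m (-a) = ∑ k ∈ Icc 1 (m - 1), ζ ^ (a * k) / (1 - (ζ ^ k)⁻¹) := by
    rw [lefschetzSum, ← sum_Icc_one_sub_one_reflect]
    refine sum_congr rfl fun k hk => ?_
    obtain ⟨hk1, hkm⟩ := mem_Icc.mp hk
    replace hkm : k ≤ m := by omega
    have hζ0 : ζ ≠ 0 := hζ.ne_zero (by omega)
    rw [pow_sub₀ _ hζ0 hkm, hζ.pow_eq_one, one_mul, Nat.cast_sub hkm,
      show -a * (m - k : ℤ) = a * k + m * (-a) by ring, zpow_add₀ hζ0, zpow_mul ζ m,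
      zpow_natCast, hζ.pow_eq_one, one_zpow, mul_one]
  rw [hreflect, lefschetzSum, ← sum_add_distrib]
  refine sum_congr rfl fun k hk => ?_
  have hζ0 : ζ ≠ 0 := hζ.ne_zero (by grind)
  rw [div_one_sub_inv (pow_ne_zero k hζ0) (hζ.pow_ne_one_of_mem_Icc hk)]
  ring

lemma two_mul_lefschetzSum_zero (hm : 0 < m) : 2 * lefschetzSum ζ m 0 = m - 1 := by
  have h := lefschetzSum_add_lefschetzSum_neg hζ 0
  rwa [neg_zero, sum_Icc_one_sub_one_zpow_zero_mul hm, ← two_mul] at h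

lemma lefschetzSum_natCast {a : ℕ} (ha : 1 ≤ a) (ham : a ≤ m) :
    lefschetzSum ζ m a = lefschetzSum ζ m 0 + a - m := by
  induction a, ha using Nat.le_induction with
  | base =>
    have h := lefschetzSum_sub_lefschetzSum_add_one hζ 0
    rw [sum_Icc_one_sub_one_zpow_zero_mul (by omega), zero_add] at h
    push_cast
    linear_combination -h
  | succ a ha ih =>
    have h := lefschetzSum_sub_lefschetzSum_add_one hζ a
    rw [hζ.sum_Icc_one_sub_one_zpow_mul (by omega) ?_, ih (by omega)] at h
    · push_cast
      linear_combination -h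
    · exact_mod_cast (Nat.not_dvd_of_pos_of_lt (by omega) (by omega))

lemma lefschetzSum_neg_natCast {a : ℕ} (ha : 1 ≤ a) (ham : a < m) :
    lefschetzSum ζ m (-a) = m - a - 1 - lefschetzSum ζ m 0 := by
  have hma : ¬ (m : ℤ) ∣ a := by exact_mod_cast Nat.not_dvd_of_pos_of_lt ha ham
  have h := lefschetzSum_add_lefschetzSum_neg hζ a
  rw [hζ.sum_Icc_one_sub_one_zpow_mul (by omega) hma, lefschetzSum_natCast hζ ha ham.le] at h
  linear_combination h

end

/-- Atiyah–Bott fixed point computation at the heart of Theorem 4.7 of the paper.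
Let `m ≥ 2`, `θ = exp(2πi/m)`, `1 ≤ l' ≤ m − 1`, let `P₊ + Z₊ + N₊ = N` and
`P₋ + Z₋ + N₋ = N` be nonnegative integers and `d` an integer.  Then, in `ℂ`,
`d + N + ∑_{k=1}^{m−1} [ (P₊·θ^{l'k} + Z₊ + N₊·θ^{−l'k})/(1 − θ^{−k})
  + (P₋·θ^{l'k} + Z₋ + N₋·θ^{−l'k})/(1 − θ^{k}) ]
  = d + m·N − m·(P₋ + N₊) + l'·(P₋ + N₊ − P₊ − N₋)`. -/
theorem atiyah_bott_weight_sum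
    (m l' : ℕ) (hm : 2 ≤ m) (hl1 : 1 ≤ l') (hl2 : l' ≤ m - 1)
    (θ : ℂ) (hθ : θ = Complex.exp (2 * Real.pi * Complex.I / m))
    (Pp Zp Np Pm Zm Nm N : ℕ) (d : ℤ)
    (hp : Pp + Zp + Np = N) (hn : Pm + Zm + Nm = N) :
    (d : ℂ) + N +
      ∑ k ∈ Finset.Icc 1 (m - 1),
        (((Pp : ℂ) * θ ^ (l' * k) + (Zp : ℂ) + (Np : ℂ) * θ ^ (-(l' * k : ℤ))) /
            (1 - θ ^ (-(k : ℤ))) +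
          ((Pm : ℂ) * θ ^ (l' * k) + (Zm : ℂ) + (Nm : ℂ) * θ ^ (-(l' * k : ℤ))) /
            (1 - θ ^ (k : ℕ))) =
      (d : ℂ) + (m : ℂ) * N - (m : ℂ) * ((Pm : ℂ) + Np) +
        (l' : ℂ) * ((Pm : ℂ) + (Np : ℂ) - (Pp : ℂ) - (Nm : ℂ)) := by
  have hθ : IsPrimitiveRoot θ m := hθ ▸ Complex.isPrimitiveRoot_exp m (by omega)
  have hsplit : ∀ k ∈ Icc 1 (m - 1),
      ((Pp : ℂ) * θ ^ (l' * k) + Zp + Np * θ ^ (-(l' * k : ℤ))) / (1 - θ ^ (-(k : ℤ))) +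
          (Pm * θ ^ (l' * k) + Zm + Nm * θ ^ (-(l' * k : ℤ))) / (1 - θ ^ k) =
        Pp * θ ^ ((l' : ℤ) * k) + Zp * θ ^ ((0 : ℤ) * k) + Np * θ ^ (-(l' : ℤ) * k) +
          ((Pm - Pp) * (θ ^ ((l' : ℤ) * k) / (1 - θ ^ k)) +
            (Zm - Zp) * (θ ^ ((0 : ℤ) * k) / (1 - θ ^ k)) +
            (Nm - Np) * (θ ^ (-(l' : ℤ) * k) / (1 - θ ^ k))) := by
    intro k hk
    rw [zpow_neg, zpow_neg, neg_mul, zpow_neg, zero_mul, zpow_zero, zpow_natCast,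
      ← Nat.cast_mul, zpow_natCast,
      div_one_sub_inv (pow_ne_zero k (hθ.ne_zero (by omega))) (hθ.pow_ne_one_of_mem_Icc hk)]
    ring
  have hl' : ¬ (m : ℤ) ∣ l' := by exact_mod_cast Nat.not_dvd_of_pos_of_lt (by omega) (by omega)
  have hG0 : lefschetzSum θ m 0 = (m - 1) / 2 := by
    linear_combination two_mul_lefschetzSum_zero hθ (by omega) / 2
  have hGpos := lefschetzSum_natCast hθ hl1 (by omega)
  have hGneg := lefschetzSum_neg_natCast hθ hl1 (by omega)
  unfold lefschetzSum at hG0 hGpos hGneg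
  have hZp : (Zp : ℂ) = N - Pp - Np := by rw [← hp]; push_cast; ring
  have hZm : (Zm : ℂ) = N - Pm - Nm := by rw [← hn]; push_cast; ring
  rw [sum_congr rfl hsplit]
  simp only [sum_add_distrib, ← mul_sum, sum_Icc_one_sub_one_zpow_zero_mul (by omega : 0 < m),
    hθ.sum_Icc_one_sub_one_zpow_mul (by omega) hl',
    hθ.sum_Icc_one_sub_one_zpow_mul (by omega) (dvd_neg.not.mpr hl'), hG0, hGpos, hGneg, hZp, hZm]
  ring
end
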